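/- arXiv:math/0408401 — 3 statements merged into one kernel-verified Lean document; each statement's English description precedes it below -/
import Mathlib

section
/- Every positive rational number q appears in some Stern–Brocot sequence F_m; that is, there exist m and an entry a/b of F_m with b > 0 and q = a/b. -/
/-- One step of mediant insertion: between every two consecutive entries `(a,b)`, `(c,d)`
(representing `a/b`, `c/d`), insert the mediant `(a+c, b+d)`. -/
def sbStep : List (ℕ × ℕ) → List (ℕ × ℕ)
  | [] => []
  | [x] => [x]
  | x :: y :: rest => x :: (x.1 + y.1, x.2 + y.2) :: sbStep (y :: rest)

/-- The Stern–Brocot (Farey) sequences: `F₀ = [0/1, 1/0]` and `F_{m+1}` is obtained from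
`F_m` by mediant insertion. -/
def sbSeq : ℕ → List (ℕ × ℕ)
  | 0 => [(0, 1), (1, 0)]
  | m + 1 => sbStep (sbSeq m)

/-!
In `ℕ × ℕ` the mediant of `x` and `y` is the sum `x + y`. Write `p/s` as `s • (0, 1) + p • (1, 0)`. For adjacent entries `x, y` and `k, l > 0`, the target
`k • x + l • y` equals `(k - l) • x + l • (x + y)` or `k • (x + y) + (l - k) • y`, a combination
of one of the adjacent pairs `x, x + y` and `x + y, y` of the next sequence. This is the
subtractive Euclidean algorithm on `(k, l)`; it stops at `k = l`, where the target is a multiple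
of the mediant `x + y`, itself an entry of the next sequence.
-/

theorem sbStep_cons (x : ℕ × ℕ) (L : List (ℕ × ℕ)) : ∃ t, sbStep (x :: L) = x :: t := by
  cases L with
  | nil => exact ⟨[], rfl⟩
  | cons y rest => exact ⟨_, rfl⟩

theorem infix_sbStep {x y : ℕ × ℕ} :
    ∀ {L : List (ℕ × ℕ)}, [x, y] <:+: L → [x, x + y, y] <:+: sbStep L
  | [], h => absurd h.length_le (by simp)
  | [_], h => absurd h.length_le (by simp)
  | u :: v :: rest, h => by
    change _ <:+: u :: (u + v) :: sbStep (v :: rest)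
    rcases List.infix_cons_iff.mp h with hpre | hinf
    · obtain ⟨rfl, hy⟩ := List.cons_prefix_cons.mp hpre
      obtain ⟨rfl, -⟩ := List.cons_prefix_cons.mp hy
      obtain ⟨t, ht⟩ := sbStep_cons y rest
      rw [ht]
      exact ⟨[], t, rfl⟩
    · exact (infix_sbStep hinf).trans ((List.suffix_cons _ _).trans (List.suffix_cons _ _)).isInfix

theorem infix_sbSeq_succ_left {m : ℕ} {x y : ℕ × ℕ} (h : [x, y] <:+: sbSeq m) :
    [x, x + y] <:+: sbSeq (m + 1) :=
  List.IsInfix.trans ⟨[], [y], rfl⟩ (infix_sbStep h)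

theorem infix_sbSeq_succ_right {m : ℕ} {x y : ℕ × ℕ} (h : [x, y] <:+: sbSeq m) :
    [x + y, y] <:+: sbSeq (m + 1) :=
  List.IsInfix.trans ⟨[x], [], rfl⟩ (infix_sbStep h)

theorem exists_mem_sbSeq_proportional (k l : ℕ) (hk : 0 < k) (hl : 0 < l) {m : ℕ}
    {x y : ℕ × ℕ} (hxy : [x, y] <:+: sbSeq m) (hpos : 0 < (x + y).2) :
    ∃ m' z, z ∈ sbSeq m' ∧ 0 < z.2 ∧
      z.1 * (k • x + l • y).2 = z.2 * (k • x + l • y).1 := by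
  rcases lt_trichotomy k l with hkl | rfl | hkl
  · obtain ⟨t, rfl⟩ : ∃ t, l = k + t := ⟨l - k, by omega⟩
    have hpos' : 0 < (x + y + y).2 := by simp only [Prod.snd_add] at hpos ⊢; omega
    have hv : k • (x + y) + t • y = k • x + (k + t) • y := by
      rw [smul_add, add_smul]; abel
    rw [← hv]
    exact exists_mem_sbSeq_proportional k t hk (by omega) (infix_sbSeq_succ_right hxy) hpos'
  · refine ⟨m + 1, x + y, (infix_sbStep hxy).subset (by simp), hpos, ?_⟩
    rw [← smul_add, Prod.smul_fst, Prod.smul_snd, smul_eq_mul, smul_eq_mul]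
    ring
  · obtain ⟨t, rfl⟩ : ∃ t, k = l + t := ⟨k - l, by omega⟩
    have hpos' : 0 < (x + (x + y)).2 := by simp only [Prod.snd_add] at hpos ⊢; omega
    have hv : t • x + l • (x + y) = (l + t) • x + l • y := by
      rw [smul_add, add_smul]; abel
    rw [← hv]
    exact exists_mem_sbSeq_proportional t l (by omega) hl (infix_sbSeq_succ_left hxy) hpos'
termination_by k + l

/-- Every positive rational `q` appears in some Stern–Brocot sequence `F_m`: there is an
entry `(a, b)` of `F_m` with `b > 0` and `q = a/b`. -/
theorem statement9 (q : ℚ) (hq : 0 < q) :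
    ∃ (m : ℕ) (p : ℕ × ℕ), p ∈ sbSeq m ∧ 0 < p.2 ∧ q = (p.1 : ℚ) / (p.2 : ℚ) := by
  have hnum : 0 < q.num := Rat.num_pos.mpr hq
  obtain ⟨m, z, hz, hz2, hprop⟩ := exists_mem_sbSeq_proportional q.den q.num.toNat q.den_pos
    (by omega) (m := 0) (x := (0, 1)) (y := (1, 0)) (List.infix_refl _) (by decide)
  simp only [Prod.smul_mk, smul_eq_mul, Prod.mk_add_mk, mul_zero, mul_one, add_zero,
    zero_add] at hprop
  refine ⟨m, z, hz, hz2, ?_⟩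
  have hq' : q = (q.num.toNat : ℚ) / q.den := by
    conv_lhs => rw [← Rat.num_div_den q]
    rw [← Int.toNat_of_nonneg hnum.le]
    rfl
  rw [hq', div_eq_div_iff (by positivity) (by positivity), mul_comm]
  exact_mod_cast hprop.symm
end

section
/- For every N ≥ 3 and every list of integers p₁, …, p_N all ≥ 2, there exists a finite group G and elements y₁, …, y_N ∈ G such that y_i has order exactly p_i for each i and y₁·y₂·⋯·y_N = 1. -/
/-!
A triple of orders `(p, q, r)` is realized in `PGL(2, 𝔽_ℓ)` for a prime `ℓ ≡ 1 [MOD 2pqr]`.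
The class of a diagonalizable matrix with eigenvalues `x, y` has order `orderOf (x / y)`, and the
triangular matrices `A = !![λ, 1; 0, 1]`, `B = !![1, 0; t, μ]` have eigenvalue ratios `λ` and
`μ⁻¹`, while `t` can be tuned so that `A * B` (of determinant `λμ`) has any eigenvalues `X, Y` with
`XY = λμ`. Longer tuples follow by induction on the length: solutions `z` for `(p₀, …, p_{n-1})`
and `y` for `(p₁, …, p_n)` combine into `(z₀, 1), (z₁, y₀), …, (z_{n-1}, y_{n-2}), (1, y_{n-1})`
in a direct product, where the two coordinates in each middle slot have the same order.
-/

open Matrix MatrixGroups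

namespace Matrix

lemma diagonal_fin_two_mem_range_scalar_iff {R : Type*} [CommRing R] {a b : R} :
    diagonal ![a, b] ∈ Set.range (scalar (Fin 2)) ↔ a = b := by
  constructor
  · rintro ⟨c, hc⟩
    have h := diagonal_injective hc
    exact (congr_fun h 0).symm.trans (congr_fun h 1)
  · rintro rfl
    exact ⟨a, by ext i j; fin_cases i <;> fin_cases j <;> rfl⟩

namespace ProjGenLinGroup

theorem orderOf_mk_of_mul_eq_mul_diagonal {R : Type*} [CommRing R] {A P : GL (Fin 2) R}
    {x y : Rˣ} (h : (A : Matrix (Fin 2) (Fin 2) R) * P = P * diagonal ![(x : R), y]) :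
    orderOf (mk A) = orderOf (x / y) := by
  let D : GL (Fin 2) R := ⟨diagonal ![(x : R), y], diagonal ![((x⁻¹ : Rˣ) : R), (y⁻¹ : Rˣ)],
    by ext i j; fin_cases i <;> fin_cases j <;> simp,
    by ext i j; fin_cases i <;> fin_cases j <;> simp⟩
  have hA : A = P * D * P⁻¹ := eq_mul_inv_iff_mul_eq.mpr (Units.ext h)
  rw [hA, map_mul, map_mul, map_inv, ← MulAut.conj_apply, MulEquiv.orderOf_eq,
    orderOf_eq_orderOf_iff]
  intro n
  have hDn : ((D ^ n : GL (Fin 2) R) : Matrix (Fin 2) (Fin 2) R) =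
      diagonal ![(x : R) ^ n, (y : R) ^ n] := by
    rw [Units.val_pow_eq_pow_val, diagonal_pow]
    congr 1
    ext i
    fin_cases i <;> rfl
  rw [← map_pow, mk_eq_one, GeneralLinearGroup.mem_center_iff_val_mem_range_scalar, hDn,
    diagonal_fin_two_mem_range_scalar_iff, div_pow, div_eq_one, Units.ext_iff,
    Units.val_pow_eq_pow_val, Units.val_pow_eq_pow_val]

theorem exists_orderOf_mk_mul_eq {F : Type*} [Field F] {l m X Y : Fˣ} (hl : l ≠ 1) (hm : m ≠ 1)
    (hXY : X ≠ Y) (hprod : X * Y = l * m) :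
    ∃ A B : GL (Fin 2) F, orderOf (mk A) = orderOf l ∧ orderOf (mk B) = orderOf m ∧
      orderOf (mk (A * B)) = orderOf (X / Y) := by
  have hl' : (1 : F) - l ≠ 0 := sub_ne_zero.mpr fun h => hl (Units.val_eq_one.mp h.symm)
  have hm' : (1 : F) - m ≠ 0 := sub_ne_zero.mpr fun h => hm (Units.val_eq_one.mp h.symm)
  have hXY' : (Y : F) - X ≠ 0 := sub_ne_zero.mpr fun h => hXY (Units.val_injective h.symm)
  have hprod' : (X : F) * Y = l * m := by exact_mod_cast hprod
  -- `A * B = !![l + t, m; t, m]` has trace `l + m + t = X + Y` and determinant `l * m = X * Y`;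
  -- the columns of `PA`, `PB`, `PC` are eigenvectors.
  set t : F := X + Y - l - m
  let A := GeneralLinearGroup.mkOfDetNeZero !![(l : F), 1; 0, 1] (by simp [det_fin_two_of])
  let B := GeneralLinearGroup.mkOfDetNeZero !![1, 0; t, (m : F)] (by simp [det_fin_two_of])
  let PA := GeneralLinearGroup.mkOfDetNeZero !![1, 1; 0, 1 - (l : F)] (by simpa [det_fin_two_of])
  let PB := GeneralLinearGroup.mkOfDetNeZero !![1 - (m : F), 0; t, 1] (by simpa [det_fin_two_of])
  let PC := GeneralLinearGroup.mkOfDetNeZero !![(m : F), m; X - l - t, Y - l - t] (by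
    rw [det_fin_two_of, show (m : F) * (Y - l - t) - m * (X - l - t) = m * (Y - X) by ring]
    exact mul_ne_zero m.ne_zero hXY')
  refine ⟨A, B, ?_, ?_, ?_⟩
  · simpa using orderOf_mk_of_mul_eq_mul_diagonal (A := A) (P := PA) (x := l) (y := 1) (by
      ext i j; fin_cases i <;> fin_cases j <;> simp [A, PA, mul_apply, Fin.sum_univ_two])
  · simpa using orderOf_mk_of_mul_eq_mul_diagonal (A := B) (P := PB) (x := 1) (y := m) (by
      ext i j; fin_cases i <;> fin_cases j <;> simp [B, PB, mul_apply, Fin.sum_univ_two]; ring)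
  · exact orderOf_mk_of_mul_eq_mul_diagonal (A := A * B) (P := PC) (by
      ext i j; fin_cases i <;> fin_cases j <;> simp [A, B, PC, t, mul_apply, Fin.sum_univ_two] <;>
        first | ring1 | linear_combination hprod')

end ProjGenLinGroup

end Matrix

theorem IsCyclic.exists_orderOf_eq_of_dvd {G : Type*} [Group G] [Finite G] [IsCyclic G] {d : ℕ}
    (hd : d ∣ Nat.card G) : ∃ g : G, orderOf g = d := by
  obtain ⟨g, hg⟩ := IsCyclic.exists_ofOrder_eq_natCard (α := G)
  exact ⟨g ^ (orderOf g / d), orderOf_pow_orderOf_div (hg ▸ Nat.card_pos.ne') (hg ▸ hd)⟩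

theorem List.prod_ofFn_prodMk {M N : Type*} [Monoid M] [Monoid N] {n : ℕ} (u : Fin n → M)
    (v : Fin n → N) :
    (List.ofFn fun i => (u i, v i)).prod = ((List.ofFn u).prod, (List.ofFn v).prod) := by
  induction n with
  | zero => rfl
  | succ n ih => simp [List.ofFn_succ, ih]

theorem Prod.orderOf_mk_eq_of_dvd {M N : Type*} [Monoid M] [Monoid N] {a : M} {b : N} {k : ℕ}
    (ha : orderOf a ∣ k) (hb : orderOf b ∣ k) (h : orderOf a = k ∨ orderOf b = k) :
    orderOf (a, b) = k := by
  rw [Prod.orderOf]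
  refine Nat.dvd_antisymm (Nat.lcm_dvd ha hb) ?_
  rcases h with h | h
  · exact h ▸ Nat.dvd_lcm_left _ _
  · exact h ▸ Nat.dvd_lcm_right _ _

def Realizable {n : ℕ} (p : Fin n → ℕ) : Prop :=
  ∃ (G : Type) (_ : Group G) (_ : Finite G) (y : Fin n → G),
    (∀ i, orderOf (y i) = p i) ∧ (List.ofFn y).prod = 1

theorem Realizable.of_init_of_tail {n : ℕ} (hn : n ≠ 0) {p : Fin (n + 1) → ℕ}
    (hinit : Realizable (Fin.init p)) (htail : Realizable (Fin.tail p)) : Realizable p := by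
  obtain ⟨H, _, _, z, hz, hz_prod⟩ := hinit
  obtain ⟨G, _, _, y, hy, hy_prod⟩ := htail
  let u : Fin (n + 1) → H := Fin.snoc z 1
  let v : Fin (n + 1) → G := Fin.cons 1 y
  refine ⟨H × G, inferInstance, inferInstance, fun i => (u i, v i), fun i => ?_, ?_⟩
  · have hu (j : Fin n) : orderOf (u j.castSucc) = p j.castSucc := by simp [u, hz, Fin.init]
    have hv (j : Fin n) : orderOf (v j.succ) = p j.succ := by simp [v, hy, Fin.tail]
    refine Prod.orderOf_mk_eq_of_dvd ?_ ?_ ?_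
    · induction i using Fin.lastCases with
      | last => simp [u]
      | cast j => exact (hu j).dvd
    · induction i using Fin.cases with
      | zero => simp [v]
      | succ j => exact (hv j).dvd
    · obtain ⟨m, rfl⟩ := Nat.exists_eq_succ_of_ne_zero hn
      rcases Fin.eq_castSucc_or_eq_last i with ⟨j, rfl⟩ | rfl
      · exact .inl (hu j)
      · exact .inr (Fin.succ_last m ▸ hv (Fin.last m))
  · rw [List.prod_ofFn_prodMk, List.ofFn_cons, List.ofFn_succ' u]
    simp [u, hz_prod, hy_prod]

theorem realizable_three_of_dvd_card_units {F : Type} [Field F] [Finite F] {p q r : ℕ}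
    (hp : 2 ≤ p) (hq : 2 ≤ q) (hr : 2 ≤ r) (hdvd : 2 * p * q * r ∣ Nat.card Fˣ) :
    Realizable ![p, q, r] := by
  obtain ⟨α, hα⟩ := IsCyclic.exists_orderOf_eq_of_dvd (d := 2 * p)
    ((Dvd.intro (q * r) (by ring)).trans hdvd)
  obtain ⟨β, hβ⟩ := IsCyclic.exists_orderOf_eq_of_dvd (d := 2 * q)
    ((Dvd.intro (p * r) (by ring)).trans hdvd)
  obtain ⟨γ, hγ⟩ := IsCyclic.exists_orderOf_eq_of_dvd (d := 2 * r)
    ((Dvd.intro (p * q) (by ring)).trans hdvd)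
  have horder_sq {x : Fˣ} {k : ℕ} (hx : orderOf x = 2 * k) : orderOf (x ^ 2) = k := by
    rw [orderOf_pow_of_dvd two_ne_zero (hx ▸ dvd_mul_right 2 k), hx]
    omega
  have hne_one {x : Fˣ} {k : ℕ} (hx : orderOf x = k) (hk : 2 ≤ k) : x ≠ 1 := by
    rintro rfl
    rw [orderOf_one] at hx
    omega
  -- The factor `2` provides square roots: `X = αβγ` and `Y = αβγ⁻¹` satisfy `XY = α²β²` and
  -- `X / Y = γ²`.
  have hquot : α * β * γ / (α * β * γ⁻¹) = γ ^ 2 := by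
    rw [mul_div_mul_left_eq_div, div_inv_eq_mul, pow_two]
  obtain ⟨A, B, hA, hB, hAB⟩ :=
    ProjGenLinGroup.exists_orderOf_mk_mul_eq (X := α * β * γ) (Y := α * β * γ⁻¹)
      (hne_one (horder_sq hα) hp) (hne_one (horder_sq hβ) hq)
      (fun h => hne_one (horder_sq hγ) hr (by rw [← hquot, h, div_self']))
      (by rw [mul_mul_mul_comm, mul_inv_cancel, mul_one, ← pow_two, mul_pow])
  refine ⟨PGL(2, F), inferInstance, Finite.of_surjective _ ProjGenLinGroup.mk_surjective,
    ![ProjGenLinGroup.mk A, ProjGenLinGroup.mk B, (ProjGenLinGroup.mk (A * B))⁻¹], ?_, ?_⟩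
  · intro i
    fin_cases i
    · simpa [hA] using horder_sq hα
    · simpa [hB] using horder_sq hβ
    · exact (orderOf_inv _).trans (hAB.trans (hquot ▸ horder_sq hγ))
  · simp [List.ofFn_succ, ← mul_assoc]

theorem realizable_three {p q r : ℕ} (hp : 2 ≤ p) (hq : 2 ≤ q) (hr : 2 ≤ r) :
    Realizable ![p, q, r] := by
  obtain ⟨ℓ, hℓ, -, hmod⟩ := Nat.exists_prime_gt_modEq_one (k := 2 * p * q * r) 0 (by positivity)
  have := Fact.mk hℓ
  refine realizable_three_of_dvd_card_units (F := ZMod ℓ) hp hq hr ?_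
  rw [Nat.card_eq_fintype_card, ZMod.card_units]
  exact (Nat.modEq_iff_dvd' hℓ.one_le).mp hmod.symm

theorem realizable_of_forall_two_le {N : ℕ} (hN : 3 ≤ N) {p : Fin N → ℕ} (hp : ∀ i, 2 ≤ p i) :
    Realizable p := by
  induction N, hN using Nat.le_induction with
  | base =>
    have : p = ![p 0, p 1, p 2] := by ext i; fin_cases i <;> rfl
    exact this ▸ realizable_three (hp 0) (hp 1) (hp 2)
  | succ n hn ih =>
    exact .of_init_of_tail (by omega) (ih fun i => hp _) (ih fun i => hp _)

/-- For any `N ≥ 3` and integers `p₁, …, p_N ≥ 2` there is a finite group `G` and elements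
`y₁, …, y_N` with `y_i` of order exactly `p_i` and `y₁ ⋯ y_N = 1`. -/
theorem statement10 (N : ℕ) (hN : 3 ≤ N) (p : Fin N → ℕ) (hp : ∀ i, 2 ≤ p i) :
    ∃ G : GrpCat, Finite G ∧ ∃ y : Fin N → G,
      (∀ i, orderOf (y i) = p i) ∧ (List.ofFn y).prod = 1 := by
  obtain ⟨G, _, _, y, hy, hprod⟩ := realizable_of_forall_two_le hN hp
  refine ⟨GrpCat.of (ULift G), inferInstanceAs (Finite (ULift G)),
    MulEquiv.ulift.symm ∘ y, fun i => (MulEquiv.orderOf_eq _ _).trans (hy i), ?_⟩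
  rw [← List.map_ofFn, ← map_list_prod, hprod, map_one]
end

section
/- Let X be a topological space, I a finite index set, and f_i : X → ℕ functions, each upper semicontinuous, such that the sum Σ_{i∈I} f_i is a constant function on X. Then each f_i is locally constant. -/
/-- If finitely many upper semicontinuous `ℕ`-valued functions have constant sum, then each
of them is locally constant. -/
theorem statement12 {X : Type*} [TopologicalSpace X] {I : Type*} [Fintype I]
    (f : I → X → ℕ) (hf : ∀ i, UpperSemicontinuous (f i))
    (c : ℕ) (hc : ∀ x, ∑ i, f i x = c) :
    ∀ i, IsLocallyConstant (f i) := by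
  intro i
  rw [IsLocallyConstant.iff_eventually_eq]
  intro x
  have h : ∀ᶠ y in nhds x, ∀ j, f j y ≤ f j x := by
    rw [Filter.eventually_all]
    intro j
    have := hf j x (f j x + 1) (Nat.lt_succ_self _)
    filter_upwards [this] with y hy
    exact Nat.lt_succ_iff.mp hy
  filter_upwards [h] with y hy
  by_contra hne
  have hlt : f i y < f i x := lt_of_le_of_ne (hy i) hne
  have : ∑ j, f j y < ∑ j, f j x :=
    Finset.sum_lt_sum (fun j _ => hy j) ⟨i, Finset.mem_univ i, hlt⟩
  rw [hc y, hc x] at this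
  exact lt_irrefl c this
end
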